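/- Let s ∈ {A,B}^ω be a balanced word with 0 < f_A(s) ≤ 1/3 containing no occurrence of the factor ABA (hence no occurrence of AA). Consider the non-alternating Domino game Γ_s({a,b}, ℱ₂, ℤ) on ℤ with alphabet {a,b} and forbidden patterns ℱ₂ = { w ∈ {a,b}^9 : |w|_a ≥ 5 } (all words of length 9 containing at least 5 letters a). Then player B has a winning strategy: B can play so that no window of 9 consecutive coloured cells ever contains 5 or more cells coloured a. -/

import Mathlib

open Filter Topology

attribute [local instance] Classical.propDecidable

/-- The two players. -/
inductive Player | A | B
deriving DecidableEq

/-- A (possibly partial) colouring of `ℤ`: `none` means uncoloured.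
Colours are natural numbers; the alphabet of size `m` is `{0, …, m-1}`. -/
abbrev BoardZ := ℤ → Option ℕ

/-- A finite pattern on `ℤ`, encoded as a list of tiles (cell, colour). -/
abbrev PatternZ := List (ℤ × ℕ)

/-- A move: `none` is a pass, `some (i, a)` colours cell `i` with colour `a`. -/
abbrev MoveZ := Option (ℤ × ℕ)

/-- A (positional) strategy: a move for every position. -/
abbrev StrategyZ := BoardZ → MoveZ

/-- The pattern `p` occurs in the board `x` translated by `t`. -/
def occursAtZ (p : PatternZ) (x : BoardZ) (t : ℤ) : Prop :=
  ∀ q ∈ p, x (t + q.1) = some q.2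

/-- A position is final when a translate of some forbidden pattern occurs. -/
def isFinalZ (F : Set PatternZ) (x : BoardZ) : Prop :=
  ∃ p ∈ F, ∃ t : ℤ, occursAtZ p x t

/-- A colouring move: an uncoloured cell of `ℤ` receives a colour of the alphabet
`{0, …, m-1}` (a pass is not a colouring move). -/
def legalColour (m : ℕ) (x : BoardZ) : MoveZ → Prop
  | none => False
  | some (i, a) => x i = none ∧ a < m

/-- Legality of a move in the game with passes allowed. -/
def legalZ (m : ℕ) (x : BoardZ) (mv : MoveZ) : Prop :=
  mv = none ∨ legalColour m x mv

def applyZ (x : BoardZ) : MoveZ → BoardZ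
  | none => x
  | some (i, a) => Function.update x i (some a)

/-- One step of the game: the move proposed by the strategy is played if legal
(an illegal move is treated as a pass). -/
noncomputable def stepZ (m : ℕ) (st : StrategyZ) (x : BoardZ) : BoardZ :=
  if legalZ m x (st x) then applyZ x (st x) else x

/-- The play generated by strategies `stA`, `stB` with turn order `s`,
starting from the empty board. -/
noncomputable def playZ (m : ℕ) (s : ℕ → Player) (stA stB : StrategyZ) : ℕ → BoardZ
  | 0 => fun _ => none
  | t + 1 => stepZ m (match s t with | .A => stA | .B => stB) (playZ m s stA stB t)

/-- The alternating turn order: `A` plays first. -/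
def alt : ℕ → Player := fun t => if t % 2 = 0 then .A else .B

/-- A strategy for the no-pass game: on every board having an uncoloured cell,
it plays a legal colouring move (never a pass). -/
def NoPassStrategy (m : ℕ) (st : StrategyZ) : Prop :=
  ∀ x : BoardZ, (∃ i : ℤ, x i = none) → legalColour m x (st x)

/-- The number of occurrences of the letter `A` in the factor `s_{⟦i, i+n⟧}`. -/
def countA (s : ℕ → Player) (i n : ℕ) : ℕ :=
  ((Finset.range (n + 1)).filter (fun l => s (i + l) = Player.A)).card

/-- The word `s` is balanced: any two factors of the same length have numbers of
occurrences of `A` differing by at most 1. -/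
def BalancedWord (s : ℕ → Player) : Prop :=
  ∀ i j n : ℕ, ((countA s i n : ℤ) - (countA s j n : ℤ)).natAbs ≤ 1

/-- The forbidden patterns `ℱ₂`: all words of length 9 over the alphabet
`{a, b} = {0, 1}` containing at least 5 letters `a = 0`. -/
def F2 : Set PatternZ :=
  {p | ∃ w : ℕ → ℕ, (∀ l < 9, w l < 2) ∧
        5 ≤ ((Finset.range 9).filter (fun l => w l = 0)).card ∧
        p = (List.range 9).map (fun l : ℕ => ((l : ℤ), w l))}


/-!
Group the cells of `ℤ` into triples `{3q, 3q+1, 3q+2}`. Player `B` keeps at most one `a` in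
each triple: whenever `A` colours a cell `a`, `B` colours the (at most two) still uncoloured
cells of its triple `b`. Balancedness and `f_A(s) < 1/2` rule out the factor `AA`, so together
with the absence of `ABA` every move of `A` is followed by at least two moves of `B`, which is
exactly the time `B` needs for these repairs. A window of nine consecutive cells meets at most
four triples, hence never contains five `a`s.
-/

lemma countA_add (s : ℕ → Player) (i m n : ℕ) :
    countA s i (m + n + 1) = countA s i m + countA s (i + m + 1) n := by
  simp only [countA, Finset.card_filter]
  rw [show m + n + 1 + 1 = (m + 1) + (n + 1) by omega, Finset.sum_range_add]
  simp only [add_assoc]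

lemma succ_le_countA_of_one_le_countA_pair (s : ℕ → Player) (hpair : ∀ j, 1 ≤ countA s j 1)
    (k : ℕ) :
    k + 1 ≤ countA s 0 (2 * k + 1) := by
  induction k with
  | zero => exact hpair 0
  | succ k ih =>
    have hsplit := countA_add s 0 (2 * k + 1) 1
    rw [zero_add] at hsplit
    have := hpair (2 * k + 1 + 1)
    rw [show 2 * (k + 1) + 1 = 2 * k + 1 + 1 + 1 by ring]
    omega

lemma BalancedWord.one_le_countA_pair {s : ℕ → Player} (hbal : BalancedWord s) {i : ℕ}
    (hAA : s i = .A ∧ s (i + 1) = .A) (j : ℕ) : 1 ≤ countA s j 1 := by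
  have hi : countA s i 1 = 2 := by
    simp only [countA, Finset.card_filter, Finset.sum_range_succ, Finset.sum_range_zero, add_zero,
      hAA.1, hAA.2, if_true]
  have := hbal i j 1
  omega

lemma BalancedWord.not_AA {s : ℕ → Player} (hbal : BalancedWord s) {L : ℝ}
    (hfreq : Tendsto (fun n : ℕ => (countA s 0 n : ℝ) / (n + 1)) atTop (𝓝 L)) (hL : L < 1 / 2)
    (i : ℕ) : ¬ (s i = .A ∧ s (i + 1) = .A) := by
  intro hAA
  have hodd : Tendsto (fun k : ℕ => (countA s 0 (2 * k + 1) : ℝ) / ((2 * k + 1 : ℕ) + 1))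
      atTop (𝓝 L) :=
    hfreq.comp (tendsto_atTop_mono (fun k => show k ≤ 2 * k + 1 by omega) tendsto_id)
  refine hL.not_ge (ge_of_tendsto' hodd fun k => ?_)
  have hk : (k : ℝ) + 1 ≤ countA s 0 (2 * k + 1) := by
    exact_mod_cast succ_le_countA_of_one_le_countA_pair s (hbal.one_le_countA_pair hAA) k
  rw [le_div_iff₀ (by positivity)]
  push_cast
  linarith

section Board

variable {x : BoardZ}

/-- Colour `0` is `a` and colour `1` is `b`; the triple of a cell `i` is `{j | j / 3 = i / 3}`. -/
def OneAPerTriple (x : BoardZ) : Prop :=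
  ∀ i j : ℤ, i / 3 = j / 3 → x i = some 0 → x j = some 0 → i = j

def Deficient (x : BoardZ) (j : ℤ) : Prop :=
  x j = none ∧ ∃ k : ℤ, k / 3 = j / 3 ∧ x k = some 0

lemma OneAPerTriple.card_window_le (hx : OneAPerTriple x) (t : ℤ) :
    ((Finset.range 9).filter (fun l : ℕ => x (t + l) = some 0)).card ≤ 4 :=
  calc _ ≤ (Finset.Icc (t / 3) (t / 3 + 3)).card := by
        refine Finset.card_le_card_of_injOn (fun l : ℕ => (t + l) / 3) (fun l hl => ?_)
          (fun l₁ h₁ l₂ h₂ h => ?_)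
        · simp only [Finset.coe_filter, Finset.mem_range, Set.mem_ofPred_eq] at hl
          simp only [Finset.coe_Icc, Set.mem_Icc]
          omega
        · simp only [Finset.coe_filter, Set.mem_ofPred_eq] at h₁ h₂
          exact_mod_cast add_left_cancel (hx _ _ h h₁.2 h₂.2)
    _ = 4 := by rw [Int.card_Icc, show t / 3 + 3 + 1 - t / 3 = 4 by ring]; rfl

lemma OneAPerTriple.not_isFinalZ_F2 (hx : OneAPerTriple x) : ¬ isFinalZ F2 x := by
  rintro ⟨_, ⟨w, -, hw, rfl⟩, t, hocc⟩
  have hsub : (Finset.range 9).filter (fun l => w l = 0) ⊆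
      (Finset.range 9).filter (fun l : ℕ => x (t + l) = some 0) := by
    intro l hl
    simp only [Finset.mem_filter, Finset.mem_range] at hl ⊢
    refine ⟨hl.1, ?_⟩
    rw [← hl.2]
    exact hocc _ (List.mem_map.2 ⟨l, List.mem_range.2 hl.1, rfl⟩)
  have := (Finset.card_le_card hsub).trans (hx.card_window_le t)
  omega

lemma OneAPerTriple.update_one (hx : OneAPerTriple x) (i : ℤ) :
    OneAPerTriple (Function.update x i (some 1)) := by
  intro a b hab ha hb
  have hai : a ≠ i := by rintro rfl; simp at ha
  have hbi : b ≠ i := by rintro rfl; simp at hb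
  rw [Function.update_of_ne hai] at ha
  rw [Function.update_of_ne hbi] at hb
  exact hx a b hab ha hb

lemma OneAPerTriple.update_zero (hx : OneAPerTriple x) {i : ℤ}
    (hi : ∀ k, k / 3 = i / 3 → x k ≠ some 0) : OneAPerTriple (Function.update x i (some 0)) := by
  intro a b hab ha hb
  rw [Function.update_apply] at ha hb
  split_ifs at ha hb with hai hbi hbi
  · exact hai.trans hbi.symm
  · exact absurd hb (hi b (by rw [← hab, hai]))
  · exact absurd ha (hi a (by rw [hab, hbi]))
  · exact hx a b hab ha hb

lemma deficient_update_one_subset (x : BoardZ) (i : ℤ) :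
    {j | Deficient (Function.update x i (some 1)) j} ⊆ {j | Deficient x j} \ {i} := by
  rintro j ⟨hj, k, hk, hxk⟩
  have hji : j ≠ i := by rintro rfl; simp at hj
  have hki : k ≠ i := by rintro rfl; simp at hxk
  rw [Function.update_of_ne hji] at hj
  rw [Function.update_of_ne hki] at hxk
  exact ⟨⟨hj, k, hk, hxk⟩, hji⟩

lemma deficient_update_zero_subset (hx : ∀ j, ¬ Deficient x j) (i : ℤ) :
    {j | Deficient (Function.update x i (some 0)) j} ⊆ {j : ℤ | j / 3 = i / 3} \ {i} := by
  rintro j ⟨hj, k, hk, hxk⟩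
  have hji : j ≠ i := by rintro rfl; simp at hj
  rw [Function.update_of_ne hji] at hj
  by_cases hki : k = i
  · subst hki
    exact ⟨hk.symm, hji⟩
  · rw [Function.update_of_ne hki] at hxk
    exact absurd ⟨hj, k, hk, hxk⟩ (hx j)

lemma encard_triple_diff_singleton (i : ℤ) : ({j : ℤ | j / 3 = i / 3} \ {i}).encard = 2 := by
  have htriple : {j : ℤ | j / 3 = i / 3} = ↑(Finset.Ico (3 * (i / 3)) (3 * (i / 3) + 3)) := by
    ext j
    simp only [Set.mem_ofPred_eq, Finset.coe_Ico, Set.mem_Ico]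
    omega
  rw [Set.encard_sdiff_singleton_of_mem (show i ∈ {j : ℤ | j / 3 = i / 3} from rfl), htriple,
    Set.encard_coe_eq_coe_finsetCard, Int.card_Ico, add_sub_cancel_left]
  rfl

end Board

lemma stepZ_eq_self_or_update (m : ℕ) (st : StrategyZ) (x : BoardZ) :
    stepZ m st x = x ∨
      ∃ i c, x i = none ∧ c < m ∧ stepZ m st x = Function.update x i (some c) := by
  unfold stepZ
  split_ifs with hleg
  · rcases hmv : st x with _ | ⟨i, c⟩
    · exact Or.inl rfl
    · rw [hmv] at hleg
      obtain ⟨hi, hc⟩ := hleg.resolve_left (by simp)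
      exact Or.inr ⟨i, c, hi, hc, rfl⟩
  · exact Or.inl rfl

def Repairable (x : BoardZ) (n : ℕ) : Prop :=
  OneAPerTriple x ∧ {j | Deficient x j}.encard ≤ n

noncomputable def repair : StrategyZ := fun x =>
  if h : ∃ j, Deficient x j then some (h.choose, 1) else none

section Repairable

variable {x : BoardZ} {n : ℕ}

lemma Repairable.stepZ_repair (hx : Repairable x n) : Repairable (stepZ 2 repair x) (n - 1) := by
  by_cases h : ∃ j, Deficient x j
  · have hstep : stepZ 2 repair x = Function.update x h.choose (some 1) := by
      have hmv : repair x = some (h.choose, 1) := dif_pos h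
      have hlegal : legalZ 2 x (some (h.choose, 1)) := Or.inr ⟨h.choose_spec.1, by norm_num⟩
      rw [stepZ, hmv, if_pos hlegal]
      rfl
    rw [hstep]
    refine ⟨hx.1.update_one _, ?_⟩
    calc _ ≤ ({j | Deficient x j} \ {h.choose}).encard :=
          Set.encard_le_encard (deficient_update_one_subset x _)
      _ = {j | Deficient x j}.encard - 1 := Set.encard_sdiff_singleton_of_mem h.choose_spec
      _ ≤ n - 1 := tsub_le_tsub_right hx.2 1
      _ = ((n - 1 : ℕ) : ℕ∞) := (ENat.natCast_sub n 1).symm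
  · have hstep : stepZ 2 repair x = x := by
      have hmv : repair x = none := dif_neg h
      rw [stepZ, hmv, if_pos (show legalZ 2 x none from Or.inl rfl)]
      rfl
    rw [hstep]
    simp only [not_exists] at h
    exact ⟨hx.1, by simp [h]⟩

lemma Repairable.stepZ_of_zero (hx : Repairable x 0) (st : StrategyZ) :
    Repairable (stepZ 2 st x) 2 := by
  have hnone : ∀ j, ¬ Deficient x j := by
    simpa [Set.eq_empty_iff_forall_notMem] using hx.2
  rcases stepZ_eq_self_or_update 2 st x with h | ⟨i, c, hi, hc, h⟩
  · rw [h]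
    exact ⟨hx.1, hx.2.trans (by norm_num)⟩
  rw [h]
  obtain rfl | rfl : c = 0 ∨ c = 1 := by omega
  · refine ⟨hx.1.update_zero fun k hk hxk => hnone i ⟨hi, k, hk, hxk⟩, ?_⟩
    exact (Set.encard_le_encard (deficient_update_zero_subset hnone i)).trans
      (encard_triple_diff_singleton i).le
  · refine ⟨hx.1.update_one i, ?_⟩
    exact (Set.encard_le_encard (deficient_update_one_subset x i)).trans (by simp [hnone])

end Repairable

section Game

variable {s : ℕ → Player}

/-- Deficient cells are created only by a move of `A` (at most two of them), and each move
of `B` repairs one. -/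
def debt (s : ℕ → Player) : ℕ → ℕ
  | 0 => 0
  | 1 => if s 0 = .A then 2 else 0
  | t + 2 => if s (t + 1) = .A then 2 else if s t = .A then 1 else 0

lemma debt_eq_zero (hgap : ∀ i, s i = .A → s (i + 1) ≠ .A ∧ s (i + 2) ≠ .A) {t : ℕ}
    (ht : s t = .A) : debt s t = 0 := by
  match t, ht with
  | 0, _ => rfl
  | 1, ht =>
    have h0 : s 0 ≠ .A := fun h => (hgap 0 h).1 ht
    simp [debt, h0]
  | t + 2, ht =>
    have h1 : s (t + 1) ≠ .A := fun h => (hgap (t + 1) h).1 ht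
    have h0 : s t ≠ .A := fun h => (hgap t h).2 ht
    simp [debt, h0, h1]

lemma debt_succ_of_A {t : ℕ} (h : s t = .A) : debt s (t + 1) = 2 := by
  cases t <;> simp [debt, h]

lemma debt_succ_of_B {t : ℕ} (h : s t = .B) : debt s (t + 1) = debt s t - 1 := by
  rcases t with _ | _ | t <;> simp only [debt, h, reduceCtorEq, if_false] <;> split_ifs <;> rfl

lemma playZ_succ_of_A {m : ℕ} {stA stB : StrategyZ} {t : ℕ} (h : s t = .A) :
    playZ m s stA stB (t + 1) = stepZ m stA (playZ m s stA stB t) := by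
  rw [playZ, h]

lemma playZ_succ_of_B {m : ℕ} {stA stB : StrategyZ} {t : ℕ} (h : s t = .B) :
    playZ m s stA stB (t + 1) = stepZ m stB (playZ m s stA stB t) := by
  rw [playZ, h]

lemma repairable_playZ_repair (hgap : ∀ i, s i = .A → s (i + 1) ≠ .A ∧ s (i + 2) ≠ .A)
    (stA : StrategyZ) (t : ℕ) : Repairable (playZ 2 s stA repair t) (debt s t) := by
  induction t with
  | zero => exact ⟨fun i j _ hi => by simp [playZ] at hi, by simp [playZ, Deficient, debt]⟩
  | succ t ih =>
    cases hst : s t with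
    | A =>
      rw [playZ_succ_of_A hst, debt_succ_of_A hst]
      exact (debt_eq_zero hgap hst ▸ ih).stepZ_of_zero stA
    | B =>
      rw [playZ_succ_of_B hst, debt_succ_of_B hst]
      exact ih.stepZ_repair

end Game

theorem bWins_majority_game_general (s : ℕ → Player) (hbal : BalancedWord s) (L : ℝ)
    (hfreq : Tendsto (fun n : ℕ => (countA s 0 n : ℝ) / (n + 1)) atTop (𝓝 L))
    (hL : L ≤ 1 / 3)
    (hABA : ∀ i, ¬ (s i = Player.A ∧ s (i + 1) = Player.B ∧ s (i + 2) = Player.A)) :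
    ∃ stB : StrategyZ, ∀ stA : StrategyZ, ∀ t : ℕ,
      ¬ isFinalZ F2 (playZ 2 s stA stB t) := by
  have hAA := hbal.not_AA hfreq (by linarith)
  have hgap : ∀ i, s i = .A → s (i + 1) ≠ .A ∧ s (i + 2) ≠ .A := by
    intro i hi
    have h1 : s (i + 1) ≠ .A := fun h => hAA i ⟨hi, h⟩
    refine ⟨h1, fun h2 => hABA i ⟨hi, ?_, h2⟩⟩
    cases h : s (i + 1)
    exacts [absurd h h1, rfl]
  exact ⟨repair, fun stA t => (repairable_playZ_repair hgap stA t).1.not_isFinalZ_F2⟩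

/-- Let `s` be a balanced turn-order word with `0 < f_A(s) ≤ 1/3`
and containing no occurrence of the factor `ABA`. Then `B` has a winning strategy in
the game `Γ_s({a,b}, ℱ₂, ℤ)` where `ℱ₂` is the set of words of length 9 with at least
5 letters `a`: `B` can play so that no window of 9 consecutive coloured cells ever
contains 5 or more cells coloured `a`. -/
theorem bWins_majority_game (s : ℕ → Player) (hbal : BalancedWord s) (L : ℝ)
    (hfreq : Tendsto (fun n : ℕ => (countA s 0 n : ℝ) / (n + 1)) atTop (𝓝 L))
    (hL0 : 0 < L) (hL : L ≤ 1 / 3)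
    (hABA : ∀ i, ¬ (s i = Player.A ∧ s (i + 1) = Player.B ∧ s (i + 2) = Player.A)) :
    ∃ stB : StrategyZ, ∀ stA : StrategyZ, ∀ t : ℕ,
      ¬ isFinalZ F2 (playZ 2 s stA stB t) :=
  bWins_majority_game_general s hbal L hfreq hL hABA
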